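/- Let (γ,v₁,v₂) be a pseudo-spherical spacelike framed curve on I with ⟨v₁,v₁⟩ = ε and curvature (α,ℓ,m,n); assume m(s)+n(s) ≠ 0 and m(s)−n(s) ≠ 0 for all s ∈ I. Let v₀ ∈ AdS³ and s₀ ∈ I. Then d_{v₀}(s₀) = d′_{v₀}(s₀) = d″_{v₀}(s₀) = 0 if and only if there exist a, b, c ∈ ℝ with v₀ = γ(s₀) + a v₁(s₀) + b v₂(s₀) + c μ(s₀) and c² = −ε(a² − b²), and at least one of the following holds: (i) α(s₀) = α′(s₀) = 0; (ii) α(s₀) = 0 and there exist λ ∈ ℝ and a sign ± with v₀ = γ(s₀) + λ(v₁(s₀) ± v₂(s₀)); (iii) for some sign ±, v₀ = γ(s₀) − (α(s₀)/(m(s₀) ± n(s₀)))·(v₁(s₀) ± v₂(s₀)). -/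

import Mathlib

noncomputable section

/-- ℝ⁴ as `Fin 4 → ℝ`, carrying the pseudo-scalar product of index 2. -/
abbrev R4 : Type := Fin 4 → ℝ

/-- ℝ³ as `Fin 3 → ℝ`. -/
abbrev R3 : Type := Fin 3 → ℝ

/-- The pseudo-scalar product ⟨u,w⟩ = −u₁w₁ − u₂w₂ + u₃w₃ + u₄w₄ of ℝ⁴₂. -/
def pip (u w : R4) : ℝ :=
  -(u 0 * w 0) - u 1 * w 1 + u 2 * w 2 + u 3 * w 3

/-- The anti-de Sitter 3-space AdS³ = {u : ⟨u,u⟩ = −1}. -/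
def AdS3 : Set R4 := {u | pip u u = -1}

/-- The 3×3 minor of the rows u,v,w using columns a,b,c. -/
def minor3 (u v w : R4) (a b c : Fin 4) : ℝ :=
  u a * (v b * w c - v c * w b) - u b * (v a * w c - v c * w a)
    + u c * (v a * w b - v b * w a)

/-- The triple product u×v×w in ℝ⁴₂, the formal determinant with first row
(−e₁,−e₂,e₃,e₄). -/
def trip (u v w : R4) : R4 :=
  ![-(minor3 u v w 1 2 3), minor3 u v w 0 2 3, minor3 u v w 0 1 3,
    -(minor3 u v w 0 1 2)]

/-- A pseudo-spherical spacelike framed curve on `I` with sign `ε`. -/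
structure IsFramedCurve (I : Set ℝ) (γ v₁ v₂ : ℝ → R4) (ε : ℝ) : Prop where
  eps : ε = 1 ∨ ε = -1
  smooth_γ : ContDiffOn ℝ (⊤ : ℕ∞) γ I
  smooth_v₁ : ContDiffOn ℝ (⊤ : ℕ∞) v₁ I
  smooth_v₂ : ContDiffOn ℝ (⊤ : ℕ∞) v₂ I
  mem_ads : ∀ s ∈ I, γ s ∈ AdS3
  norm_v₁ : ∀ s ∈ I, pip (v₁ s) (v₁ s) = ε
  norm_v₂ : ∀ s ∈ I, pip (v₂ s) (v₂ s) = -ε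
  orth_v₁v₂ : ∀ s ∈ I, pip (v₁ s) (v₂ s) = 0
  orth_γv₁ : ∀ s ∈ I, pip (γ s) (v₁ s) = 0
  orth_γv₂ : ∀ s ∈ I, pip (γ s) (v₂ s) = 0
  tang_v₁ : ∀ s ∈ I, pip (deriv γ s) (v₁ s) = 0
  tang_v₂ : ∀ s ∈ I, pip (deriv γ s) (v₂ s) = 0

/-- μ(s) = γ(s)×v₁(s)×v₂(s). -/
def muF (γ v₁ v₂ : ℝ → R4) (s : ℝ) : R4 := trip (γ s) (v₁ s) (v₂ s)

/-- α(s) = ⟨γ′(s), μ(s)⟩. -/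
def curvA (γ v₁ v₂ : ℝ → R4) (s : ℝ) : ℝ := pip (deriv γ s) (muF γ v₁ v₂ s)

/-- ℓ(s) = −ε⟨v₁′(s), v₂(s)⟩. -/
def curvL (ε : ℝ) (v₁ v₂ : ℝ → R4) (s : ℝ) : ℝ := -ε * pip (deriv v₁ s) (v₂ s)

/-- m(s) = ⟨v₁′(s), μ(s)⟩. -/
def curvM (γ v₁ v₂ : ℝ → R4) (s : ℝ) : ℝ := pip (deriv v₁ s) (muF γ v₁ v₂ s)

/-- n(s) = ⟨v₂′(s), μ(s)⟩. -/
def curvN (γ v₁ v₂ : ℝ → R4) (s : ℝ) : ℝ := pip (deriv v₂ s) (muF γ v₁ v₂ s)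

/-- The nullcone front NF±(s,λ) = γ(s) + λ(v₁(s) ± v₂(s)), with sign `e = ±1`. -/
def NF (γ v₁ v₂ : ℝ → R4) (e : ℝ) (q : ℝ × ℝ) : R4 :=
  γ q.1 + q.2 • (v₁ q.1 + e • v₂ q.1)

/-- The function σ± of Theorem 4.3, with sign `e = ±1`. -/
def sigmaF (γ v₁ v₂ : ℝ → R4) (ε e : ℝ) (s : ℝ) : ℝ :=
  curvA γ v₁ v₂ s *
      (-(deriv (curvM γ v₁ v₂) s + e * deriv (curvN γ v₁ v₂) s)
        + curvL ε v₁ v₂ s * (curvN γ v₁ v₂ s + e * curvM γ v₁ v₂ s))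
    + deriv (curvA γ v₁ v₂) s * (curvM γ v₁ v₂ s + e * curvN γ v₁ v₂ s)

/-- A point is a singular point of `f : ℝ×ℝ → ℝ⁴₂` when the two partial
derivatives are linearly dependent (the differential has rank < 2). -/
def SingularAt (f : ℝ × ℝ → R4) (q : ℝ × ℝ) : Prop :=
  ¬ LinearIndependent ℝ
      ![deriv (fun t => f (t, q.2)) q.1, deriv (fun l => f (q.1, l)) q.2]

/-- The cuspidal edge model CE(u,v) = (u², u³, v). -/
def CE : ℝ × ℝ → R3 := fun q => ![q.1 ^ 2, q.1 ^ 3, q.2]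

/-- The swallowtail model SW(u,v) = (3u⁴+u²v, 4u³+2uv, v). -/
def SW : ℝ × ℝ → R3 :=
  fun q => ![3 * q.1 ^ 4 + q.1 ^ 2 * q.2, 4 * q.1 ^ 3 + 2 * q.1 * q.2, q.2]

/-- `f` (a map into AdS³) is locally diffeomorphic at `p` to the model `g` at `0`:
there are a smooth diffeomorphism `φ` from a neighborhood `U` of `0` in ℝ² onto a
neighborhood `V` of `p` with `φ 0 = p`, and a smooth diffeomorphism `Ψ` from a
neighborhood `W` of `f p` in the submanifold AdS³ onto an open set `W'` of ℝ³
with `Ψ (f p) = g 0`, such that `Ψ ∘ f ∘ φ = g` near `0`. -/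
def LocallyDiffeoAt (f : ℝ × ℝ → R4) (p : ℝ × ℝ) (g : ℝ × ℝ → R3) : Prop :=
  ∃ (U V : Set (ℝ × ℝ)) (φ φinv : ℝ × ℝ → ℝ × ℝ)
    (W : Set R4) (W' : Set R3) (Ψ : R4 → R3) (Ψinv : R3 → R4),
    IsOpen U ∧ (0 : ℝ × ℝ) ∈ U ∧ IsOpen V ∧ p ∈ V ∧
    ContDiffOn ℝ (⊤ : ℕ∞) φ U ∧ Set.BijOn φ U V ∧ φ 0 = p ∧
    ContDiffOn ℝ (⊤ : ℕ∞) φinv V ∧ (∀ x ∈ U, φinv (φ x) = x) ∧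
    (∃ O : Set R4, IsOpen O ∧ W = O ∩ AdS3) ∧ f p ∈ W ∧ IsOpen W' ∧
    ContDiffOn ℝ (⊤ : ℕ∞) Ψ W ∧ Set.BijOn Ψ W W' ∧ Ψ (f p) = g 0 ∧
    ContDiffOn ℝ (⊤ : ℕ∞) Ψinv W' ∧ (∀ y ∈ W, Ψinv (Ψ y) = y) ∧
    (∀ x ∈ U, f (φ x) ∈ W) ∧ (∀ x ∈ U, Ψ (f (φ x)) = g x)

/-- The anti-de Sitter distance-squared function d_{v₀}(s) = ⟨γ(s)−v₀, γ(s)−v₀⟩. -/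
def dSq (γ : ℝ → R4) (v₀ : R4) (s : ℝ) : ℝ := pip (γ s - v₀) (γ s - v₀)

/- ### Auxiliary lemmas -/

lemma pip_comm (u w : R4) : pip u w = pip w u := by simp [pip]; ring

lemma pip_addL (u v w : R4) : pip (u + v) w = pip u w + pip v w := by
  simp [pip, Pi.add_apply]; ring

lemma pip_subL (u v w : R4) : pip (u - v) w = pip u w - pip v w := by
  simp [pip, Pi.sub_apply]; ring

lemma pip_smulL (a : ℝ) (u w : R4) : pip (a • u) w = a * pip u w := by
  simp [pip, Pi.smul_apply, smul_eq_mul]; ring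

lemma pip_sub_self (u v : R4) :
    pip (u - v) (u - v) = pip u u - 2 * pip u v + pip v v := by
  simp [pip, Pi.sub_apply]; ring

lemma pip_zeroR (u : R4) : pip u 0 = 0 := by simp [pip]

lemma trip_orth₀ (u v w : R4) : pip (trip u v w) u = 0 := by
  simp [pip, trip, minor3]; ring

lemma trip_orth₁ (u v w : R4) : pip (trip u v w) v = 0 := by
  simp [pip, trip, minor3]; ring

lemma trip_orth₂ (u v w : R4) : pip (trip u v w) w = 0 := by
  simp [pip, trip, minor3]; ring

lemma trip_norm (u v w : R4) : pip (trip u v w) (trip u v w) =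
    pip u u * (pip v v * pip w w - pip v w * pip v w)
    - pip u v * (pip u v * pip w w - pip v w * pip u w)
    + pip u w * (pip u v * pip v w - pip v v * pip u w) := by
  simp [pip, trip, minor3]; ring

lemma rows_zero (r0 r1 r2 r3 w : R4)
    (hD : pip (trip r0 r1 r2) r3 ≠ 0)
    (h0 : pip w r0 = 0) (h1 : pip w r1 = 0) (h2 : pip w r2 = 0)
    (h3 : pip w r3 = 0) : w = 0 := by
  have key0 : pip (trip r0 r1 r2) r3 * w 0 =
      minor3 r1 r2 r3 1 2 3 * pip w r0 - minor3 r0 r2 r3 1 2 3 * pip w r1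
      + minor3 r0 r1 r3 1 2 3 * pip w r2 - minor3 r0 r1 r2 1 2 3 * pip w r3 := by
    simp [pip, trip, minor3]; ring
  have key1 : pip (trip r0 r1 r2) r3 * w 1 =
      -(minor3 r1 r2 r3 0 2 3 * pip w r0) + minor3 r0 r2 r3 0 2 3 * pip w r1
      - minor3 r0 r1 r3 0 2 3 * pip w r2 + minor3 r0 r1 r2 0 2 3 * pip w r3 := by
    simp [pip, trip, minor3]; ring
  have key2 : pip (trip r0 r1 r2) r3 * w 2 =
      -(minor3 r1 r2 r3 0 1 3 * pip w r0) + minor3 r0 r2 r3 0 1 3 * pip w r1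
      - minor3 r0 r1 r3 0 1 3 * pip w r2 + minor3 r0 r1 r2 0 1 3 * pip w r3 := by
    simp [pip, trip, minor3]; ring
  have key3 : pip (trip r0 r1 r2) r3 * w 3 =
      minor3 r1 r2 r3 0 1 2 * pip w r0 - minor3 r0 r2 r3 0 1 2 * pip w r1
      + minor3 r0 r1 r3 0 1 2 * pip w r2 - minor3 r0 r1 r2 0 1 2 * pip w r3 := by
    simp [pip, trip, minor3]; ring
  rw [h0, h1, h2, h3] at key0 key1 key2 key3
  simp only [mul_zero, sub_zero, add_zero, neg_zero, zero_add,
    zero_sub] at key0 key1 key2 key3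
  have k0 : w 0 = 0 := by
    rcases mul_eq_zero.mp key0 with h | h
    exacts [absurd h hD, h]
  have k1 : w 1 = 0 := by
    rcases mul_eq_zero.mp key1 with h | h
    exacts [absurd h hD, h]
  have k2 : w 2 = 0 := by
    rcases mul_eq_zero.mp key2 with h | h
    exacts [absurd h hD, h]
  have k3 : w 3 = 0 := by
    rcases mul_eq_zero.mp key3 with h | h
    exacts [absurd h hD, h]
  funext j
  fin_cases j
  · simpa using k0
  · simpa using k1
  · simpa using k2
  · simpa using k3

lemma hasDerivAt_pip {f g : ℝ → R4} {f' g' : R4} {s : ℝ}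
    (hf : HasDerivAt f f' s) (hg : HasDerivAt g g' s) :
    HasDerivAt (fun t => pip (f t) (g t)) (pip f' (g s) + pip (f s) g') s := by
  have hfi := fun i => hasDerivAt_pi.mp hf i
  have hgi := fun i => hasDerivAt_pi.mp hg i
  have h := ((((hfi 0).mul (hgi 0)).neg.sub ((hfi 1).mul (hgi 1))).add
      ((hfi 2).mul (hgi 2))).add ((hfi 3).mul (hgi 3))
  refine h.congr_deriv ?_
  simp [pip]; ring

lemma muF_differentiableAt {γ v₁ v₂ : ℝ → R4} {s : ℝ}
    (hγ : DifferentiableAt ℝ γ s) (h1 : DifferentiableAt ℝ v₁ s)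
    (h2 : DifferentiableAt ℝ v₂ s) :
    DifferentiableAt ℝ (muF γ v₁ v₂) s := by
  have Dg : ∀ i, DifferentiableAt ℝ (fun t => γ t i) s := fun i =>
    (differentiableAt_pi.mp hγ) i
  have D1 : ∀ i, DifferentiableAt ℝ (fun t => v₁ t i) s := fun i =>
    (differentiableAt_pi.mp h1) i
  have D2 : ∀ i, DifferentiableAt ℝ (fun t => v₂ t i) s := fun i =>
    (differentiableAt_pi.mp h2) i
  have key : ∀ a b c : Fin 4,
      DifferentiableAt ℝ (fun t => minor3 (γ t) (v₁ t) (v₂ t) a b c) s := by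
    intro a b c
    simp only [minor3]
    exact (((Dg a).mul (((D1 b).mul (D2 c)).sub ((D1 c).mul (D2 b)))).sub
      ((Dg b).mul (((D1 a).mul (D2 c)).sub ((D1 c).mul (D2 a))))).add
      ((Dg c).mul (((D1 a).mul (D2 b)).sub ((D1 b).mul (D2 a))))
  apply differentiableAt_pi.mpr
  intro i
  fin_cases i
  · exact (key 1 2 3).neg
  · exact key 0 2 3
  · exact key 0 1 3
  · exact (key 0 1 2).neg

/-- Proposition 5.1 (3): characterization of
d_{v₀}(s₀) = d′_{v₀}(s₀) = d″_{v₀}(s₀) = 0. -/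
theorem dist_squared_second_iff
    (I : Set ℝ) (hIopen : IsOpen I) (hIconn : I.OrdConnected)
    (γ v₁ v₂ : ℝ → R4) (ε : ℝ) (h : IsFramedCurve I γ v₁ v₂ ε)
    (v₀ : R4) (hv₀ : v₀ ∈ AdS3) (s₀ : ℝ) (hs₀ : s₀ ∈ I)
    (hmnp : ∀ s ∈ I, curvM γ v₁ v₂ s + curvN γ v₁ v₂ s ≠ 0)
    (hmnm : ∀ s ∈ I, curvM γ v₁ v₂ s - curvN γ v₁ v₂ s ≠ 0) :
    (dSq γ v₀ s₀ = 0 ∧ deriv (dSq γ v₀) s₀ = 0 ∧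
        deriv (deriv (dSq γ v₀)) s₀ = 0) ↔
      ((∃ a b c : ℝ,
        v₀ = γ s₀ + a • v₁ s₀ + b • v₂ s₀ + c • muF γ v₁ v₂ s₀ ∧
        c ^ 2 = -ε * (a ^ 2 - b ^ 2)) ∧
        ((curvA γ v₁ v₂ s₀ = 0 ∧ deriv (curvA γ v₁ v₂) s₀ = 0) ∨
          (curvA γ v₁ v₂ s₀ = 0 ∧
            ∃ lam : ℝ, v₀ = γ s₀ + lam • (v₁ s₀ + v₂ s₀) ∨
              v₀ = γ s₀ + lam • (v₁ s₀ - v₂ s₀)) ∨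
          (v₀ = γ s₀ - (curvA γ v₁ v₂ s₀ /
              (curvM γ v₁ v₂ s₀ + curvN γ v₁ v₂ s₀)) • (v₁ s₀ + v₂ s₀) ∨
            v₀ = γ s₀ - (curvA γ v₁ v₂ s₀ /
              (curvM γ v₁ v₂ s₀ - curvN γ v₁ v₂ s₀)) • (v₁ s₀ - v₂ s₀)))) := by
  classical
  have hε2 : ε ^ 2 = 1 := by rcases h.eps with he | he <;> rw [he] <;> norm_num
  have hεne : ε ≠ 0 := by rcases h.eps with he | he <;> rw [he] <;> norm_num
  have hGG : ∀ s ∈ I, pip (γ s) (γ s) = -1 := fun s hs => h.mem_ads s hs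
  have hv₀v₀ : pip v₀ v₀ = -1 := hv₀
  -- existence of derivatives
  have hdγ : ∀ s ∈ I, HasDerivAt γ (deriv γ s) s := fun s hs =>
    ((h.smooth_γ.differentiableOn (by simp)).differentiableAt
      (hIopen.mem_nhds hs)).hasDerivAt
  have hdv₁ : ∀ s ∈ I, HasDerivAt v₁ (deriv v₁ s) s := fun s hs =>
    ((h.smooth_v₁.differentiableOn (by simp)).differentiableAt
      (hIopen.mem_nhds hs)).hasDerivAt
  have hdv₂ : ∀ s ∈ I, HasDerivAt v₂ (deriv v₂ s) s := fun s hs =>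
    ((h.smooth_v₂.differentiableOn (by simp)).differentiableAt
      (hIopen.mem_nhds hs)).hasDerivAt
  have hγ'cd : ContDiffOn ℝ (⊤ : ℕ∞) (deriv γ) I :=
    h.smooth_γ.deriv_of_isOpen hIopen (by simp)
  have hdγ' : ∀ s ∈ I, HasDerivAt (deriv γ) (deriv (deriv γ) s) s := fun s hs =>
    ((hγ'cd.differentiableOn (by simp)).differentiableAt
      (hIopen.mem_nhds hs)).hasDerivAt
  have hdμ : ∀ s ∈ I, HasDerivAt (muF γ v₁ v₂) (deriv (muF γ v₁ v₂) s) s :=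
    fun s hs => (muF_differentiableAt (hdγ s hs).differentiableAt
      (hdv₁ s hs).differentiableAt (hdv₂ s hs).differentiableAt).hasDerivAt
  -- frame facts
  have hμG : ∀ s ∈ I, pip (muF γ v₁ v₂ s) (γ s) = 0 := fun s _ => trip_orth₀ _ _ _
  have hμ1 : ∀ s ∈ I, pip (muF γ v₁ v₂ s) (v₁ s) = 0 := fun s _ => trip_orth₁ _ _ _
  have hμ2 : ∀ s ∈ I, pip (muF γ v₁ v₂ s) (v₂ s) = 0 := fun s _ => trip_orth₂ _ _ _
  have hμμ : ∀ s ∈ I, pip (muF γ v₁ v₂ s) (muF γ v₁ v₂ s) = 1 := by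
    intro s hs
    have ht := trip_norm (γ s) (v₁ s) (v₂ s)
    simp only [muF]
    rw [ht, hGG s hs, h.norm_v₁ s hs, h.norm_v₂ s hs, h.orth_v₁v₂ s hs,
      h.orth_γv₁ s hs, h.orth_γv₂ s hs]
    linear_combination hε2
  -- point facts at s₀
  have gGG : pip (γ s₀) (γ s₀) = -1 := hGG s₀ hs₀
  have g11 : pip (v₁ s₀) (v₁ s₀) = ε := h.norm_v₁ s₀ hs₀
  have g22 : pip (v₂ s₀) (v₂ s₀) = -ε := h.norm_v₂ s₀ hs₀
  have g12 : pip (v₁ s₀) (v₂ s₀) = 0 := h.orth_v₁v₂ s₀ hs₀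
  have g21 : pip (v₂ s₀) (v₁ s₀) = 0 := by rw [pip_comm]; exact g12
  have gG1 : pip (γ s₀) (v₁ s₀) = 0 := h.orth_γv₁ s₀ hs₀
  have g1G : pip (v₁ s₀) (γ s₀) = 0 := by rw [pip_comm]; exact gG1
  have gG2 : pip (γ s₀) (v₂ s₀) = 0 := h.orth_γv₂ s₀ hs₀
  have g2G : pip (v₂ s₀) (γ s₀) = 0 := by rw [pip_comm]; exact gG2
  have gμG : pip (muF γ v₁ v₂ s₀) (γ s₀) = 0 := hμG s₀ hs₀
  have gGμ : pip (γ s₀) (muF γ v₁ v₂ s₀) = 0 := by rw [pip_comm]; exact gμG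
  have gμ1 : pip (muF γ v₁ v₂ s₀) (v₁ s₀) = 0 := hμ1 s₀ hs₀
  have g1μ : pip (v₁ s₀) (muF γ v₁ v₂ s₀) = 0 := by rw [pip_comm]; exact gμ1
  have gμ2 : pip (muF γ v₁ v₂ s₀) (v₂ s₀) = 0 := hμ2 s₀ hs₀
  have g2μ : pip (v₂ s₀) (muF γ v₁ v₂ s₀) = 0 := by rw [pip_comm]; exact gμ2
  have gμμ : pip (muF γ v₁ v₂ s₀) (muF γ v₁ v₂ s₀) = 1 := hμμ s₀ hs₀
  -- tangency of γ with γ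
  have hγ'G : ∀ s ∈ I, pip (deriv γ s) (γ s) = 0 := by
    intro s hs
    have hder := (hasDerivAt_pip (hdγ s hs) (hdγ s hs)).deriv
    have hev : (fun t => pip (γ t) (γ t)) =ᶠ[nhds s] fun _ => (-1 : ℝ) :=
      Filter.eventuallyEq_of_mem (hIopen.mem_nhds hs) fun t ht => hGG t ht
    rw [hev.deriv_eq, deriv_const] at hder
    have hc := pip_comm (γ s) (deriv γ s)
    linarith
  -- γ' = α μ at s₀
  have hMne : pip (trip (γ s₀) (v₁ s₀) (v₂ s₀)) (muF γ v₁ v₂ s₀) ≠ 0 := by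
    have h1 : pip (trip (γ s₀) (v₁ s₀) (v₂ s₀)) (muF γ v₁ v₂ s₀) = 1 := gμμ
    rw [h1]; norm_num
  have hγ's₀ : deriv γ s₀ = curvA γ v₁ v₂ s₀ • muF γ v₁ v₂ s₀ := by
    refine sub_eq_zero.mp (rows_zero (γ s₀) (v₁ s₀) (v₂ s₀) (muF γ v₁ v₂ s₀)
      _ hMne ?_ ?_ ?_ ?_)
    · rw [pip_subL, pip_smulL, hγ'G s₀ hs₀, gμG]; ring
    · rw [pip_subL, pip_smulL, h.tang_v₁ s₀ hs₀, gμ1]; ring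
    · rw [pip_subL, pip_smulL, h.tang_v₂ s₀ hs₀, gμ2]; ring
    · rw [pip_subL, pip_smulL, gμμ]
      simp only [curvA]; ring
  -- dSq and its derivatives
  have hdval : ∀ s ∈ I, dSq γ v₀ s = -2 - 2 * pip (γ s) v₀ := by
    intro s hs
    simp only [dSq]
    rw [pip_sub_self, hGG s hs, hv₀v₀]; ring
  have hd'val : ∀ s ∈ I, deriv (dSq γ v₀) s = -2 * pip (deriv γ s) v₀ := by
    intro s hs
    have hev : dSq γ v₀ =ᶠ[nhds s] fun t => -2 - 2 * pip (γ t) v₀ :=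
      Filter.eventuallyEq_of_mem (hIopen.mem_nhds hs) fun t ht => hdval t ht
    rw [hev.deriv_eq]
    have hp := hasDerivAt_pip (hdγ s hs) (hasDerivAt_const s v₀)
    rw [pip_zeroR, add_zero] at hp
    have hq : HasDerivAt (fun t => -2 - 2 * pip (γ t) v₀)
        (-2 * pip (deriv γ s) v₀) s := by
      have h2 := (hasDerivAt_const s (-2 : ℝ)).sub ((hasDerivAt_const s (2 : ℝ)).mul hp)
      refine h2.congr_deriv ?_
      ring
    rw [hq.deriv]
  have hd''val : deriv (deriv (dSq γ v₀)) s₀ =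
      -2 * pip (deriv (deriv γ) s₀) v₀ := by
    have hev : deriv (dSq γ v₀) =ᶠ[nhds s₀] fun t => -2 * pip (deriv γ t) v₀ :=
      Filter.eventuallyEq_of_mem (hIopen.mem_nhds hs₀) fun t ht => hd'val t ht
    rw [hev.deriv_eq]
    have hp := hasDerivAt_pip (hdγ' s₀ hs₀) (hasDerivAt_const s₀ v₀)
    rw [pip_zeroR, add_zero] at hp
    have hq : HasDerivAt (fun t => -2 * pip (deriv γ t) v₀)
        (-2 * pip (deriv (deriv γ) s₀) v₀) s₀ := by
      have h2 := (hasDerivAt_const s₀ (-2 : ℝ)).mul hp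
      refine h2.congr_deriv ?_
      ring
    rw [hq.deriv]
  -- second order identities
  have hsum0 : pip (deriv (deriv γ) s₀) (γ s₀)
      + pip (deriv γ s₀) (deriv γ s₀) = 0 := by
    have hder := (hasDerivAt_pip (hdγ' s₀ hs₀) (hdγ s₀ hs₀)).deriv
    have hev : (fun t => pip (deriv γ t) (γ t)) =ᶠ[nhds s₀] fun _ => (0 : ℝ) :=
      Filter.eventuallyEq_of_mem (hIopen.mem_nhds hs₀) fun t ht => hγ'G t ht
    rw [hev.deriv_eq, deriv_const] at hder
    linarith
  have hsum1 : pip (deriv (deriv γ) s₀) (v₁ s₀)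
      + pip (deriv γ s₀) (deriv v₁ s₀) = 0 := by
    have hder := (hasDerivAt_pip (hdγ' s₀ hs₀) (hdv₁ s₀ hs₀)).deriv
    have hev : (fun t => pip (deriv γ t) (v₁ t)) =ᶠ[nhds s₀] fun _ => (0 : ℝ) :=
      Filter.eventuallyEq_of_mem (hIopen.mem_nhds hs₀) fun t ht => h.tang_v₁ t ht
    rw [hev.deriv_eq, deriv_const] at hder
    linarith
  have hsum2 : pip (deriv (deriv γ) s₀) (v₂ s₀)
      + pip (deriv γ s₀) (deriv v₂ s₀) = 0 := by
    have hder := (hasDerivAt_pip (hdγ' s₀ hs₀) (hdv₂ s₀ hs₀)).deriv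
    have hev : (fun t => pip (deriv γ t) (v₂ t)) =ᶠ[nhds s₀] fun _ => (0 : ℝ) :=
      Filter.eventuallyEq_of_mem (hIopen.mem_nhds hs₀) fun t ht => h.tang_v₂ t ht
    rw [hev.deriv_eq, deriv_const] at hder
    linarith
  have hsumμ : pip (deriv (muF γ v₁ v₂) s₀) (muF γ v₁ v₂ s₀)
      + pip (muF γ v₁ v₂ s₀) (deriv (muF γ v₁ v₂) s₀) = 0 := by
    have hder := (hasDerivAt_pip (hdμ s₀ hs₀) (hdμ s₀ hs₀)).deriv
    have hev : (fun t => pip (muF γ v₁ v₂ t) (muF γ v₁ v₂ t)) =ᶠ[nhds s₀]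
        fun _ => (1 : ℝ) :=
      Filter.eventuallyEq_of_mem (hIopen.mem_nhds hs₀) fun t ht => hμμ t ht
    rw [hev.deriv_eq, deriv_const] at hder
    linarith
  have hμ'μ : pip (muF γ v₁ v₂ s₀) (deriv (muF γ v₁ v₂) s₀) = 0 := by
    have hc := pip_comm (deriv (muF γ v₁ v₂) s₀) (muF γ v₁ v₂ s₀)
    linarith
  have hA'eq : deriv (curvA γ v₁ v₂) s₀ =
      pip (deriv (deriv γ) s₀) (muF γ v₁ v₂ s₀)
      + pip (deriv γ s₀) (deriv (muF γ v₁ v₂) s₀) := by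
    have hfun : curvA γ v₁ v₂ = fun s => pip (deriv γ s) (muF γ v₁ v₂ s) := rfl
    rw [hfun]
    exact (hasDerivAt_pip (hdγ' s₀ hs₀) (hdμ s₀ hs₀)).deriv
  have hγ'μ' : pip (deriv γ s₀) (deriv (muF γ v₁ v₂) s₀) = 0 := by
    rw [hγ's₀, pip_smulL, hμ'μ]; ring
  have e3 : pip (deriv (deriv γ) s₀) (muF γ v₁ v₂ s₀)
      = deriv (curvA γ v₁ v₂) s₀ := by
    rw [hA'eq, hγ'μ']; ring
  have e0 : pip (deriv (deriv γ) s₀) (γ s₀) = -(curvA γ v₁ v₂ s₀ ^ 2) := by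
    have hval : pip (deriv γ s₀) (deriv γ s₀) = curvA γ v₁ v₂ s₀ ^ 2 := by
      rw [hγ's₀, pip_smulL, pip_comm, pip_smulL, gμμ]; ring
    linarith
  have e1 : pip (deriv (deriv γ) s₀) (v₁ s₀)
      = -(curvA γ v₁ v₂ s₀ * curvM γ v₁ v₂ s₀) := by
    have hval : pip (deriv γ s₀) (deriv v₁ s₀)
        = curvA γ v₁ v₂ s₀ * curvM γ v₁ v₂ s₀ := by
      rw [hγ's₀, pip_smulL, pip_comm (muF γ v₁ v₂ s₀) (deriv v₁ s₀)]
      simp only [curvM]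
    linarith
  have e2 : pip (deriv (deriv γ) s₀) (v₂ s₀)
      = -(curvA γ v₁ v₂ s₀ * curvN γ v₁ v₂ s₀) := by
    have hval : pip (deriv γ s₀) (deriv v₂ s₀)
        = curvA γ v₁ v₂ s₀ * curvN γ v₁ v₂ s₀ := by
      rw [hγ's₀, pip_smulL, pip_comm (muF γ v₁ v₂ s₀) (deriv v₂ s₀)]
      simp only [curvN]
    linarith
  -- decomposition of γ''
  have hγ''dec : deriv (deriv γ) s₀ =
      (curvA γ v₁ v₂ s₀ ^ 2) • γ s₀
      + (-(ε * curvA γ v₁ v₂ s₀ * curvM γ v₁ v₂ s₀)) • v₁ s₀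
      + (ε * curvA γ v₁ v₂ s₀ * curvN γ v₁ v₂ s₀) • v₂ s₀
      + (deriv (curvA γ v₁ v₂) s₀) • muF γ v₁ v₂ s₀ := by
    refine sub_eq_zero.mp (rows_zero (γ s₀) (v₁ s₀) (v₂ s₀) (muF γ v₁ v₂ s₀)
      _ hMne ?_ ?_ ?_ ?_)
    · rw [pip_subL]
      simp only [pip_addL, pip_smulL]
      rw [e0, gGG, g1G, g2G, gμG]; ring
    · rw [pip_subL]
      simp only [pip_addL, pip_smulL]
      rw [e1, gG1, g11, g21, gμ1]
      linear_combination (curvA γ v₁ v₂ s₀ * curvM γ v₁ v₂ s₀) * hε2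
    · rw [pip_subL]
      simp only [pip_addL, pip_smulL]
      rw [e2, gG2, g12, g22, gμ2]
      linear_combination (curvA γ v₁ v₂ s₀ * curvN γ v₁ v₂ s₀) * hε2
    · rw [pip_subL]
      simp only [pip_addL, pip_smulL]
      rw [e3, gGμ, g1μ, g2μ, gμμ]; ring
  have hγ''v₀ : pip (deriv (deriv γ) s₀) v₀ =
      curvA γ v₁ v₂ s₀ ^ 2 * pip (γ s₀) v₀
      - ε * curvA γ v₁ v₂ s₀ * curvM γ v₁ v₂ s₀ * pip (v₁ s₀) v₀
      + ε * curvA γ v₁ v₂ s₀ * curvN γ v₁ v₂ s₀ * pip (v₂ s₀) v₀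
      + deriv (curvA γ v₁ v₂) s₀ * pip (muF γ v₁ v₂ s₀) v₀ := by
    rw [hγ''dec]
    simp only [pip_addL, pip_smulL]
    ring
  -- decomposition of v₀
  have hv₀dec : v₀ = (-(pip (γ s₀) v₀)) • γ s₀
      + (ε * pip (v₁ s₀) v₀) • v₁ s₀
      + (-(ε * pip (v₂ s₀) v₀)) • v₂ s₀
      + (pip (muF γ v₁ v₂ s₀) v₀) • muF γ v₁ v₂ s₀ := by
    refine sub_eq_zero.mp (rows_zero (γ s₀) (v₁ s₀) (v₂ s₀) (muF γ v₁ v₂ s₀)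
      _ hMne ?_ ?_ ?_ ?_)
    · rw [pip_subL]
      simp only [pip_addL, pip_smulL]
      rw [pip_comm v₀ (γ s₀), gGG, g1G, g2G, gμG]; ring
    · rw [pip_subL]
      simp only [pip_addL, pip_smulL]
      rw [pip_comm v₀ (v₁ s₀), gG1, g11, g21, gμ1]
      linear_combination (-(pip (v₁ s₀) v₀)) * hε2
    · rw [pip_subL]
      simp only [pip_addL, pip_smulL]
      rw [pip_comm v₀ (v₂ s₀), gG2, g12, g22, gμ2]
      linear_combination (-(pip (v₂ s₀) v₀)) * hε2
    · rw [pip_subL]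
      simp only [pip_addL, pip_smulL]
      rw [pip_comm v₀ (muF γ v₁ v₂ s₀), gGμ, g1μ, g2μ, gμμ]; ring
  -- quadratic relation
  have hquad : -(pip (γ s₀) v₀) ^ 2 + ε * pip (v₁ s₀) v₀ ^ 2
      - ε * pip (v₂ s₀) v₀ ^ 2 + pip (muF γ v₁ v₂ s₀) v₀ ^ 2 = -1 := by
    have hq := congrArg (fun x => pip x v₀) hv₀dec
    simp only [pip_addL, pip_smulL] at hq
    rw [hv₀v₀] at hq
    linear_combination -hq
  -- value formulas
  have E0 : dSq γ v₀ s₀ = -2 - 2 * pip (γ s₀) v₀ := hdval s₀ hs₀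
  have E1 : deriv (dSq γ v₀) s₀ =
      -2 * (curvA γ v₁ v₂ s₀ * pip (muF γ v₁ v₂ s₀) v₀) := by
    rw [hd'val s₀ hs₀, hγ's₀, pip_smulL]
  have E2 : deriv (deriv (dSq γ v₀)) s₀ =
      -2 * (curvA γ v₁ v₂ s₀ ^ 2 * pip (γ s₀) v₀
      - ε * curvA γ v₁ v₂ s₀ * curvM γ v₁ v₂ s₀ * pip (v₁ s₀) v₀
      + ε * curvA γ v₁ v₂ s₀ * curvN γ v₁ v₂ s₀ * pip (v₂ s₀) v₀
      + deriv (curvA γ v₁ v₂) s₀ * pip (muF γ v₁ v₂ s₀) v₀) := by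
    rw [hd''val, hγ''v₀]
  constructor
  · rintro ⟨hd0, hd1, hd2⟩
    rw [E0] at hd0
    rw [E1] at hd1
    rw [E2] at hd2
    have hP0 : pip (γ s₀) v₀ = -1 := by linarith
    have hAP3 : curvA γ v₁ v₂ s₀ * pip (muF γ v₁ v₂ s₀) v₀ = 0 := by linarith
    rw [hP0] at hd2 hquad
    have h2nd : curvA γ v₁ v₂ s₀ ^ 2
        + ε * curvA γ v₁ v₂ s₀ * curvM γ v₁ v₂ s₀ * pip (v₁ s₀) v₀
        - ε * curvA γ v₁ v₂ s₀ * curvN γ v₁ v₂ s₀ * pip (v₂ s₀) v₀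
        = deriv (curvA γ v₁ v₂) s₀ * pip (muF γ v₁ v₂ s₀) v₀ := by
      linear_combination ((1:ℝ)/2) * hd2
    refine ⟨⟨ε * pip (v₁ s₀) v₀, -(ε * pip (v₂ s₀) v₀),
      pip (muF γ v₁ v₂ s₀) v₀, ?_, ?_⟩, ?_⟩
    · conv_lhs => rw [hv₀dec]
      rw [hP0]
      module
    · linear_combination hquad
        + (ε * (pip (v₁ s₀) v₀ ^ 2 - pip (v₂ s₀) v₀ ^ 2)) * hε2
    · by_cases hA : curvA γ v₁ v₂ s₀ = 0
      · by_cases hA' : deriv (curvA γ v₁ v₂) s₀ = 0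
        · exact Or.inl ⟨hA, hA'⟩
        · have hP3 : pip (muF γ v₁ v₂ s₀) v₀ = 0 := by
            have hz : deriv (curvA γ v₁ v₂) s₀ * pip (muF γ v₁ v₂ s₀) v₀ = 0 := by
              rw [hA] at h2nd
              linear_combination -h2nd
            exact (mul_eq_zero.mp hz).resolve_left hA'
          have hsq : (pip (v₁ s₀) v₀ - pip (v₂ s₀) v₀)
              * (pip (v₁ s₀) v₀ + pip (v₂ s₀) v₀) = 0 := by
            have hz : ε * (pip (v₁ s₀) v₀ ^ 2 - pip (v₂ s₀) v₀ ^ 2) = 0 := by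
              rw [hP3] at hquad
              linear_combination hquad
            have hz2 := (mul_eq_zero.mp hz).resolve_left hεne
            linear_combination hz2
          refine Or.inr (Or.inl ⟨hA, ε * pip (v₁ s₀) v₀, ?_⟩)
          rcases mul_eq_zero.mp hsq with hpm | hpm
          · right
            have hP2 : pip (v₂ s₀) v₀ = pip (v₁ s₀) v₀ := by linarith
            conv_lhs => rw [hv₀dec]
            rw [hP0, hP2, hP3]
            module
          · left
            have hP2 : pip (v₂ s₀) v₀ = -pip (v₁ s₀) v₀ := by linarith
            conv_lhs => rw [hv₀dec]
            rw [hP0, hP2, hP3]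
            module
      · have hP3 : pip (muF γ v₁ v₂ s₀) v₀ = 0 :=
          (mul_eq_zero.mp hAP3).resolve_left hA
        have hsq : (pip (v₁ s₀) v₀ - pip (v₂ s₀) v₀)
            * (pip (v₁ s₀) v₀ + pip (v₂ s₀) v₀) = 0 := by
          have hz : ε * (pip (v₁ s₀) v₀ ^ 2 - pip (v₂ s₀) v₀ ^ 2) = 0 := by
            rw [hP3] at hquad
            linear_combination hquad
          have hz2 := (mul_eq_zero.mp hz).resolve_left hεne
          linear_combination hz2
        have hlin : curvA γ v₁ v₂ s₀
            + ε * curvM γ v₁ v₂ s₀ * pip (v₁ s₀) v₀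
            - ε * curvN γ v₁ v₂ s₀ * pip (v₂ s₀) v₀ = 0 := by
          have hz : curvA γ v₁ v₂ s₀ * (curvA γ v₁ v₂ s₀
              + ε * curvM γ v₁ v₂ s₀ * pip (v₁ s₀) v₀
              - ε * curvN γ v₁ v₂ s₀ * pip (v₂ s₀) v₀) = 0 := by
            rw [hP3] at h2nd
            linear_combination h2nd
          exact (mul_eq_zero.mp hz).resolve_left hA
        refine Or.inr (Or.inr ?_)
        rcases mul_eq_zero.mp hsq with hpm | hpm
        · right
          have hP2 : pip (v₂ s₀) v₀ = pip (v₁ s₀) v₀ := by linarith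
          have hne := hmnm s₀ hs₀
          have hcoef1 : ε * pip (v₁ s₀) v₀ =
              -(curvA γ v₁ v₂ s₀ /
                (curvM γ v₁ v₂ s₀ - curvN γ v₁ v₂ s₀)) := by
            rw [hP2] at hlin
            field_simp
            linear_combination hlin
          have hcoef2 : ε * pip (v₂ s₀) v₀ =
              -(curvA γ v₁ v₂ s₀ /
                (curvM γ v₁ v₂ s₀ - curvN γ v₁ v₂ s₀)) := by
            rw [hP2, hcoef1]
          conv_lhs => rw [hv₀dec]
          rw [hP0, hP3, hcoef1, hcoef2]
          module
        · left
          have hP2 : pip (v₂ s₀) v₀ = -pip (v₁ s₀) v₀ := by linarith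
          have hne := hmnp s₀ hs₀
          have hcoef1 : ε * pip (v₁ s₀) v₀ =
              -(curvA γ v₁ v₂ s₀ /
                (curvM γ v₁ v₂ s₀ + curvN γ v₁ v₂ s₀)) := by
            rw [hP2] at hlin
            field_simp
            linear_combination hlin
          have hcoef2 : ε * pip (v₂ s₀) v₀ =
              curvA γ v₁ v₂ s₀ /
                (curvM γ v₁ v₂ s₀ + curvN γ v₁ v₂ s₀) := by
            rw [hP2]
            rw [show ε * -pip (v₁ s₀) v₀ = -(ε * pip (v₁ s₀) v₀) by ring, hcoef1]
            ring
          conv_lhs => rw [hv₀dec]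
          rw [hP0, hP3, hcoef1, hcoef2]
          module
  · rintro ⟨⟨a, b, c, hdec, -⟩, hcase⟩
    have hP0b : pip (γ s₀) v₀ = -1 := by
      rw [pip_comm, hdec]
      simp only [pip_addL, pip_smulL]
      rw [gGG, g1G, g2G, gμG]; ring
    have hP3ii : ∀ lam : ℝ, v₀ = γ s₀ + lam • (v₁ s₀ + v₂ s₀) →
        pip (muF γ v₁ v₂ s₀) v₀ = 0 := by
      intro lam hrep
      rw [pip_comm, hrep]
      simp only [pip_addL, pip_smulL]
      rw [gGμ, g1μ, g2μ]; ring
    have hP3ii' : ∀ lam : ℝ, v₀ = γ s₀ + lam • (v₁ s₀ - v₂ s₀) →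
        pip (muF γ v₁ v₂ s₀) v₀ = 0 := by
      intro lam hrep
      rw [pip_comm, hrep]
      simp only [pip_addL, pip_subL, pip_smulL]
      rw [gGμ, g1μ, g2μ]; ring
    have hP3iii : ∀ lam : ℝ, v₀ = γ s₀ - lam • (v₁ s₀ + v₂ s₀) →
        pip (muF γ v₁ v₂ s₀) v₀ = 0 := by
      intro lam hrep
      rw [pip_comm, hrep]
      simp only [pip_addL, pip_subL, pip_smulL]
      rw [gGμ, g1μ, g2μ]; ring
    have hP3iii' : ∀ lam : ℝ, v₀ = γ s₀ - lam • (v₁ s₀ - v₂ s₀) →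
        pip (muF γ v₁ v₂ s₀) v₀ = 0 := by
      intro lam hrep
      rw [pip_comm, hrep]
      simp only [pip_addL, pip_subL, pip_smulL]
      rw [gGμ, g1μ, g2μ]; ring
    refine ⟨?_, ?_, ?_⟩
    · rw [E0, hP0b]; ring
    · rw [E1]
      rcases hcase with ⟨hA, _⟩ | ⟨hA, _⟩ | hrep | hrep
      · rw [hA]; ring
      · rw [hA]; ring
      · rw [hP3iii _ hrep]; ring
      · rw [hP3iii' _ hrep]; ring
    · rw [E2, hP0b]
      rcases hcase with ⟨hA, hA'⟩ | ⟨hA, lam, hrep | hrep⟩ | hrep | hrep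
      · rw [hA, hA']; ring
      · rw [hA, hP3ii _ hrep]; ring
      · rw [hA, hP3ii' _ hrep]; ring
      · have hq : curvA γ v₁ v₂ s₀ / (curvM γ v₁ v₂ s₀ + curvN γ v₁ v₂ s₀)
            * (curvM γ v₁ v₂ s₀ + curvN γ v₁ v₂ s₀) = curvA γ v₁ v₂ s₀ :=
          div_mul_cancel₀ _ (hmnp s₀ hs₀)
        have hP1 : pip (v₁ s₀) v₀ =
            -(curvA γ v₁ v₂ s₀ / (curvM γ v₁ v₂ s₀ + curvN γ v₁ v₂ s₀)) * ε := by
          rw [pip_comm, hrep]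
          simp only [pip_addL, pip_subL, pip_smulL]
          rw [gG1, g11, g21]; ring
        have hP2 : pip (v₂ s₀) v₀ =
            (curvA γ v₁ v₂ s₀ / (curvM γ v₁ v₂ s₀ + curvN γ v₁ v₂ s₀)) * ε := by
          rw [pip_comm, hrep]
          simp only [pip_addL, pip_subL, pip_smulL]
          rw [gG2, g12, g22]; ring
        rw [hP1, hP2, hP3iii _ hrep]
        linear_combination (-2 * curvA γ v₁ v₂ s₀
            * (curvA γ v₁ v₂ s₀ / (curvM γ v₁ v₂ s₀ + curvN γ v₁ v₂ s₀))
            * (curvM γ v₁ v₂ s₀ + curvN γ v₁ v₂ s₀)) * hε2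
          + (-2 * curvA γ v₁ v₂ s₀) * hq
      · have hq : curvA γ v₁ v₂ s₀ / (curvM γ v₁ v₂ s₀ - curvN γ v₁ v₂ s₀)
            * (curvM γ v₁ v₂ s₀ - curvN γ v₁ v₂ s₀) = curvA γ v₁ v₂ s₀ :=
          div_mul_cancel₀ _ (hmnm s₀ hs₀)
        have hP1 : pip (v₁ s₀) v₀ =
            -(curvA γ v₁ v₂ s₀ / (curvM γ v₁ v₂ s₀ - curvN γ v₁ v₂ s₀)) * ε := by
          rw [pip_comm, hrep]
          simp only [pip_addL, pip_subL, pip_smulL]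
          rw [gG1, g11, g21]; ring
        have hP2 : pip (v₂ s₀) v₀ =
            -(curvA γ v₁ v₂ s₀ / (curvM γ v₁ v₂ s₀ - curvN γ v₁ v₂ s₀)) * ε := by
          rw [pip_comm, hrep]
          simp only [pip_addL, pip_subL, pip_smulL]
          rw [gG2, g12, g22]; ring
        rw [hP1, hP2, hP3iii' _ hrep]
        linear_combination (-2 * curvA γ v₁ v₂ s₀
            * (curvA γ v₁ v₂ s₀ / (curvM γ v₁ v₂ s₀ - curvN γ v₁ v₂ s₀))
            * (curvM γ v₁ v₂ s₀ - curvN γ v₁ v₂ s₀)) * hε2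
          + (-2 * curvA γ v₁ v₂ s₀) * hq
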